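/- In a weighted tree with metric d, a function u vanishing at a fixed root is an extreme point of the unit ball of Lip⁺(d) if and only if |u(x) − u(y)| = d(x,y) for every pair of adjacent vertices x,y. -/

import Mathlib

/-- Length of a path (list of vertices) in a weighted graph. -/
noncomputable def pathLen {X : Type*} (w : X → X → ℝ) : List X → ℝ
  | [] => 0
  | [_] => 0
  | a :: b :: l => w a b + pathLen w (b :: l)

/-- `l` is a walk from `x` to `y` along edges of the weighted graph `w`. -/
def IsWalk {X : Type*} (w : X → X → ℝ) (x y : X) (l : List X) : Prop :=
  l.head? = some x ∧ l.getLast? = some y ∧ l.Chain' (fun a b => 0 < w a b)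

/-- The shortest-path distance induced by the weighted graph `w`. -/
noncomputable def gdist {X : Type*} (w : X → X → ℝ) (x y : X) : ℝ :=
  sInf {r | ∃ l, IsWalk w x y l ∧ r = pathLen w l}

/-- A finite rooted weighted tree, encoded by a parent map: every vertex reaches
the root by iterating `parent`, and `wt x` is the weight of the edge `{x, parent x}`. -/
structure WRootedTree (X : Type*) where
  root : X
  parent : X → X
  wt : X → ℝ
  parent_root : parent root = root
  reach : ∀ x, ∃ n, parent^[n] x = root
  wt_pos : ∀ x, x ≠ root → 0 < wt x

/-- The weight function of the graph underlying a rooted tree. -/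
noncomputable def treeW {X : Type*} [DecidableEq X] (T : WRootedTree X) : X → X → ℝ :=
  fun a b =>
    if a ≠ b ∧ T.parent a = b then T.wt a
    else if a ≠ b ∧ T.parent b = a then T.wt b
    else 0

/-- The tree metric: the shortest-path distance of the underlying weighted graph. -/
noncomputable def tdist {X : Type*} [DecidableEq X] (T : WRootedTree X) : X → X → ℝ :=
  gdist (treeW T)

/-- `x ⪯ y` in the tree order: `x` lies on the path from the root to `y`. -/
def treeLE {X : Type*} (T : WRootedTree X) (x y : X) : Prop :=
  ∃ n, T.parent^[n] y = x

/-- Cumulative function `Ξ(x) = ∑_{y ⪰ x} ξ(y)`, the sum of `ξ` over descendants of `x`. -/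
noncomputable def cumul {X : Type*} [Fintype X] (T : WRootedTree X) (ξ : X → ℝ) (x : X) : ℝ :=
  ∑ y, Set.indicator {y | treeLE T x y} ξ y

section Aux

variable {X : Type*} [DecidableEq X] (T : WRootedTree X)

lemma iterate_root (n : ℕ) : T.parent^[n] T.root = T.root :=
  Function.iterate_fixed T.parent_root n

lemma fixed_eq_root {x : X} (h : T.parent x = x) : x = T.root := by
  obtain ⟨n, hn⟩ := T.reach x
  rwa [Function.iterate_fixed h n] at hn

lemma periodic_eq_root {x : X} {k : ℕ} (h : T.parent^[k + 1] x = x) : x = T.root := by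
  obtain ⟨m, hm⟩ := T.reach x
  have key : ∀ N : ℕ, T.parent^[N * (k + 1)] x = x := by
    intro N
    induction N with
    | zero => simp
    | succ N ih => rw [Nat.succ_mul, Function.iterate_add_apply, h, ih]
  have hge : m ≤ m * (k + 1) := Nat.le_mul_of_pos_right m k.succ_pos
  have h2 : T.parent^[m * (k + 1)] x = T.root := by
    conv_lhs => rw [← Nat.sub_add_cancel hge]
    rw [Function.iterate_add_apply, hm, iterate_root]
  rw [key m] at h2
  exact h2

lemma parent_ne_self {x : X} (hx : x ≠ T.root) : x ≠ T.parent x :=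
  fun h => hx (fixed_eq_root T h.symm)

lemma treeW_parent {x : X} (hx : x ≠ T.root) : treeW T x (T.parent x) = T.wt x := by
  simp [treeW, parent_ne_self T hx]

lemma treeW_parent_pos {x : X} (hx : x ≠ T.root) : 0 < treeW T x (T.parent x) := by
  rw [treeW_parent T hx]; exact T.wt_pos x hx

lemma treeW_parent_rev_pos {y : X} (hy : y ≠ T.root) : 0 < treeW T (T.parent y) y := by
  have h1 : ¬ (T.parent y ≠ y ∧ T.parent (T.parent y) = y) := by
    rintro ⟨-, h2⟩
    apply hy
    apply periodic_eq_root T (k := 1)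
    rw [Function.iterate_succ_apply', Function.iterate_one]
    exact h2
  have hne : T.parent y ≠ y := (parent_ne_self T hy).symm
  simp only [treeW]
  rw [if_neg h1, if_pos (show T.parent y ≠ y ∧ True from ⟨hne, trivial⟩)]
  exact T.wt_pos y hy

lemma abs_sub_le_treeW (v : X → ℝ)
    (hv : ∀ x, x ≠ T.root → |v x - v (T.parent x)| ≤ T.wt x)
    {a b : X} (hab : 0 < treeW T a b) : |v a - v b| ≤ treeW T a b := by
  by_cases h1 : a ≠ b ∧ T.parent a = b
  · have ha : a ≠ T.root := by
      intro h
      exact h1.1 (by rw [h, ← h1.2, h, T.parent_root])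
    simp only [treeW]
    rw [if_pos h1, ← h1.2]
    exact hv a ha
  · by_cases h2 : a ≠ b ∧ T.parent b = a
    · have hb : b ≠ T.root := by
        intro h
        exact h2.1 (by rw [h, ← h2.2, h, T.parent_root])
      simp only [treeW]
      rw [if_neg h1, if_pos h2, abs_sub_comm, ← h2.2]
      exact hv b hb
    · exfalso
      simp only [treeW, if_neg h1, if_neg h2] at hab
      exact lt_irrefl 0 hab

lemma pathLen_nonneg (w : X → X → ℝ) :
    ∀ l : List X, l.Chain' (fun a b => 0 < w a b) → 0 ≤ pathLen w l := by
  intro l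
  induction l with
  | nil => intro _; simp [pathLen]
  | cons a t ih =>
    cases t with
    | nil => intro _; simp [pathLen]
    | cons b t' =>
      intro h
      simp only [List.Chain', List.isChain_cons_cons] at h
      have := ih h.2
      simp only [pathLen]
      linarith [h.1]

lemma abs_sub_le_pathLen (w : X → X → ℝ) (v : X → ℝ)
    (hv : ∀ a b : X, 0 < w a b → |v a - v b| ≤ w a b) :
    ∀ (l : List X) (x y : X), IsWalk w x y l → |v x - v y| ≤ pathLen w l := by
  intro l
  induction l with
  | nil => rintro x y ⟨h, -⟩; simp at h
  | cons a t ih =>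
    cases t with
    | nil =>
      rintro x y ⟨h1, h2, -⟩
      simp only [List.head?_cons, Option.some.injEq] at h1
      simp only [List.getLast?_singleton, Option.some.injEq] at h2
      subst h1; subst h2
      simp [pathLen]
    | cons b t' =>
      rintro x y ⟨h1, h2, h3⟩
      simp only [List.head?_cons, Option.some.injEq] at h1
      subst h1
      rw [List.getLast?_cons_cons] at h2
      simp only [List.Chain', List.isChain_cons_cons] at h3
      have hrec := ih b y ⟨rfl, h2, h3.2⟩
      have hedge := hv a b h3.1
      calc |v a - v y| ≤ |v a - v b| + |v b - v y| := abs_sub_le _ _ _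
        _ ≤ w a b + pathLen w (b :: t') := add_le_add hedge hrec
        _ = pathLen w (a :: b :: t') := rfl

lemma walk_root_exists (y : X) : ∃ l, IsWalk (treeW T) T.root y l := by
  obtain ⟨n, hn⟩ := T.reach y
  induction n generalizing y with
  | zero =>
    simp only [Function.iterate_zero, id] at hn
    subst hn
    exact ⟨[T.root], rfl, rfl, List.isChain_singleton T.root⟩
  | succ n ih =>
    by_cases hy : y = T.root
    · subst hy
      exact ⟨[T.root], rfl, rfl, List.isChain_singleton T.root⟩
    · have hn' : T.parent^[n] (T.parent y) = T.root := by
        rw [← Function.iterate_succ_apply]; exact hn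
      obtain ⟨l, hl1, hl2, hl3⟩ := ih (T.parent y) hn'
      cases l with
      | nil => simp at hl1
      | cons a t =>
        simp only [List.head?_cons, Option.some.injEq] at hl1
        subst hl1
        refine ⟨(T.root :: t) ++ [y], rfl, List.getLast?_concat, ?_⟩
        refine List.IsChain.append hl3 (List.isChain_singleton y) ?_
        intro p hp q hq
        simp only [List.head?_cons, Option.mem_def, Option.some.injEq] at hq
        subst hq
        rw [Option.mem_def, hl2, Option.some.injEq] at hp
        subst hp
        exact treeW_parent_rev_pos T hy

lemma walk_exists (x y : X) : ∃ l, IsWalk (treeW T) x y l := by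
  obtain ⟨n, hn⟩ := T.reach x
  induction n generalizing x with
  | zero =>
    simp only [Function.iterate_zero, id] at hn
    subst hn
    exact walk_root_exists T y
  | succ n ih =>
    by_cases hx : x = T.root
    · subst hx; exact walk_root_exists T y
    · have hn' : T.parent^[n] (T.parent x) = T.root := by
        rw [← Function.iterate_succ_apply]; exact hn
      obtain ⟨l, hl1, hl2, hl3⟩ := ih (T.parent x) hn'
      cases l with
      | nil => simp at hl1
      | cons a t =>
        simp only [List.head?_cons, Option.some.injEq] at hl1
        subst hl1
        refine ⟨x :: T.parent x :: t, rfl, ?_, ?_⟩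
        · rw [List.getLast?_cons_cons]; exact hl2
        · simp only [List.Chain', List.isChain_cons_cons]
          exact ⟨treeW_parent_pos T hx, hl3⟩

lemma lip_of_edge (v : X → ℝ)
    (hv : ∀ x, x ≠ T.root → |v x - v (T.parent x)| ≤ T.wt x) (x y : X) :
    |v x - v y| ≤ tdist T x y := by
  apply le_csInf
  · obtain ⟨l, hl⟩ := walk_exists T x y
    exact ⟨pathLen (treeW T) l, l, hl, rfl⟩
  · rintro r ⟨l, hl, rfl⟩
    exact abs_sub_le_pathLen (treeW T) v
      (fun a b h => abs_sub_le_treeW T v hv h) l x y hl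

lemma tdist_le_wt {x : X} (hx : x ≠ T.root) : tdist T x (T.parent x) ≤ T.wt x := by
  apply csInf_le
  · exact ⟨0, by rintro r ⟨l, hl, rfl⟩; exact pathLen_nonneg (treeW T) l hl.2.2⟩
  · refine ⟨[x, T.parent x], ⟨rfl, rfl, ?_⟩, ?_⟩
    · simp only [List.Chain', List.isChain_cons_cons]
      exact ⟨treeW_parent_pos T hx, List.isChain_singleton _⟩
    · simp [pathLen, treeW_parent T hx]

lemma mid_eq {a b c D : ℝ} (h : a + b = 2 * c) (ha : |a| ≤ D) (hb : |b| ≤ D)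
    (hc : |c| = D) : a = c := by
  obtain ⟨ha1, ha2⟩ := abs_le.mp ha
  obtain ⟨hb1, hb2⟩ := abs_le.mp hb
  rcases abs_cases c with ⟨e, -⟩ | ⟨e, -⟩ <;> rw [e] at hc <;> linarith

end Aux

open Classical in
/-- Indicator (times `ε`) of the set of descendants of `x₀`. -/
noncomputable def chi {X : Type*} (T : WRootedTree X) (x₀ : X) (ε : ℝ) : X → ℝ :=
  fun y => if treeLE T x₀ y then ε else 0

section Chi

variable {X : Type*} [DecidableEq X] (T : WRootedTree X) (x₀ : X) (ε : ℝ)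

lemma chi_root (hx : x₀ ≠ T.root) : chi T x₀ ε T.root = 0 := by
  apply if_neg
  rintro ⟨n, hn⟩
  rw [iterate_root] at hn
  exact hx hn.symm

lemma chi_parent_self (hx : x₀ ≠ T.root) : chi T x₀ ε (T.parent x₀) = 0 := by
  apply if_neg
  rintro ⟨n, hn⟩
  rw [← Function.iterate_succ_apply] at hn
  exact hx (periodic_eq_root T hn)

lemma chi_self : chi T x₀ ε x₀ = ε := if_pos ⟨0, rfl⟩

lemma chi_edge {a : X} (ha : a ≠ x₀) : chi T x₀ ε a = chi T x₀ ε (T.parent a) := by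
  have hiff : treeLE T x₀ a ↔ treeLE T x₀ (T.parent a) := by
    constructor
    · rintro ⟨n, hn⟩
      cases n with
      | zero => exact absurd hn ha
      | succ m => exact ⟨m, by rw [← Function.iterate_succ_apply]; exact hn⟩
    · rintro ⟨m, hm⟩
      exact ⟨m + 1, by rw [Function.iterate_succ_apply]; exact hm⟩
  unfold chi
  by_cases h : treeLE T x₀ a
  · rw [if_pos h, if_pos (hiff.mp h)]
  · rw [if_neg h, if_neg (fun h' => h (hiff.mpr h'))]

end Chi

/-- In a weighted tree, a function vanishing at the root is an extreme point of the
unit ball of the pointed Lipschitz space iff the Lipschitz inequality is an equality on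
every edge. -/
theorem extreme_lip_tree_iff {X : Type*} [Fintype X] [DecidableEq X] (T : WRootedTree X)
    (u : X → ℝ) (hu0 : u T.root = 0) (hu1 : ∀ x y, |u x - u y| ≤ tdist T x y) :
    (∀ g h : X → ℝ, g T.root = 0 → (∀ x y, |g x - g y| ≤ tdist T x y) →
        h T.root = 0 → (∀ x y, |h x - h y| ≤ tdist T x y) →
        (∀ z, u z = (g z + h z) / 2) → g = u ∧ h = u) ↔
      (∀ x : X, x ≠ T.root → |u x - u (T.parent x)| = tdist T x (T.parent x)) := by
  constructor
  · -- extreme → edge equalities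
    intro hext x₀ hx₀
    by_contra hne
    have hlt : |u x₀ - u (T.parent x₀)| < tdist T x₀ (T.parent x₀) :=
      lt_of_le_of_ne (hu1 _ _) hne
    set ε : ℝ := tdist T x₀ (T.parent x₀) - |u x₀ - u (T.parent x₀)| with hε
    have hεpos : 0 < ε := by simp [hε]; linarith
    set χ : X → ℝ := chi T x₀ ε with hχ
    -- edgewise Lipschitz bounds for u ± χ
    have hedge : ∀ s : ℝ, |s| = 1 → ∀ a, a ≠ T.root →
        |(u a + s * χ a) - (u (T.parent a) + s * χ (T.parent a))| ≤ T.wt a := by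
      intro s hs a ha
      by_cases hax : a = x₀
      · subst hax
        rw [hχ, chi_self, chi_parent_self T _ _ hx₀, mul_zero]
        have h1 : |u a - u (T.parent a) + s * ε - 0| ≤ |u a - u (T.parent a)| + |s * ε| := by
          rw [sub_zero]; exact abs_add_le _ _
        have h2 : |s * ε| = ε := by rw [abs_mul, hs, one_mul, abs_of_pos hεpos]
        calc |u a + s * ε - (u (T.parent a) + 0)| =
              |u a - u (T.parent a) + s * ε - 0| := by ring_nf
          _ ≤ |u a - u (T.parent a)| + ε := by rw [h2] at h1; exact h1
          _ = tdist T a (T.parent a) := by rw [hε]; ring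
          _ ≤ T.wt a := tdist_le_wt T ha
      · rw [hχ, chi_edge T _ _ hax]
        have : u a + s * chi T x₀ ε (T.parent a) -
            (u (T.parent a) + s * chi T x₀ ε (T.parent a)) = u a - u (T.parent a) := by ring
        rw [this]
        exact le_trans (hu1 a (T.parent a)) (tdist_le_wt T ha)
    have hg1 : ∀ x y, |(u x + χ x) - (u y + χ y)| ≤ tdist T x y := by
      have := hedge 1 (by norm_num)
      simp only [one_mul] at this
      exact lip_of_edge T (fun z => u z + χ z) this
    have hh1 : ∀ x y, |(u x - χ x) - (u y - χ y)| ≤ tdist T x y := by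
      have := hedge (-1) (by norm_num)
      have this' : ∀ a, a ≠ T.root →
          |(u a - χ a) - (u (T.parent a) - χ (T.parent a))| ≤ T.wt a := by
        intro a ha
        have h := this a ha
        have e : u a + -1 * χ a - (u (T.parent a) + -1 * χ (T.parent a)) =
            (u a - χ a) - (u (T.parent a) - χ (T.parent a)) := by ring
        rwa [e] at h
      exact lip_of_edge T (fun z => u z - χ z) this'
    have hg0 : u T.root + χ T.root = 0 := by
      rw [hχ, chi_root T _ _ hx₀, hu0, add_zero]
    have hh0 : u T.root - χ T.root = 0 := by
      rw [hχ, chi_root T _ _ hx₀, hu0, sub_zero]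
    have hmid : ∀ z, u z = ((u z + χ z) + (u z - χ z)) / 2 := by intro z; ring
    obtain ⟨hgu, -⟩ := hext (fun z => u z + χ z) (fun z => u z - χ z)
      hg0 hg1 hh0 hh1 hmid
    have := congrFun hgu x₀
    rw [hχ, chi_self] at this
    linarith
  · -- edge equalities → extreme
    intro hedge g h hg0 hg1 hh0 hh1 hmid
    have key : ∀ n : ℕ, ∀ x : X, T.parent^[n] x = T.root → g x = u x ∧ h x = u x := by
      intro n
      induction n with
      | zero =>
        intro x hx
        simp only [Function.iterate_zero, id] at hx
        subst hx
        exact ⟨by rw [hg0, hu0], by rw [hh0, hu0]⟩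
      | succ n ih =>
        intro x hx
        by_cases hxr : x = T.root
        · subst hxr
          exact ⟨by rw [hg0, hu0], by rw [hh0, hu0]⟩
        · have hx' : T.parent^[n] (T.parent x) = T.root := by
            rw [← Function.iterate_succ_apply]; exact hx
          obtain ⟨hgp, hhp⟩ := ih (T.parent x) hx'
          have hsum : (g x - g (T.parent x)) + (h x - h (T.parent x)) =
              2 * (u x - u (T.parent x)) := by
            have h1 := hmid x
            have h2 := hmid (T.parent x)
            linarith
          have ha := hg1 x (T.parent x)
          have hb := hh1 x (T.parent x)
          have hc := hedge x hxr
          have hga : g x - g (T.parent x) = u x - u (T.parent x) :=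
            mid_eq hsum ha hb hc
          have hha : h x - h (T.parent x) = u x - u (T.parent x) :=
            mid_eq (by linarith) hb ha hc
          constructor
          · linarith
          · linarith
    constructor
    · funext x
      obtain ⟨n, hn⟩ := T.reach x
      exact (key n x hn).1
    · funext x
      obtain ⟨n, hn⟩ := T.reach x
      exact (key n x hn).2
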